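/- arXiv:2403.01103 — 4 statements merged into one kernel-verified Lean document; each statement's English description precedes it below -/
import Mathlib

section
/- Let f_i(x) = ρx + b_i (i = 1,…,N) be an equi-contractive IFS on ℝ with 0 = b_1 < b_2 < … < b_N = 1 − ρ satisfying the finite-type condition, with totally self-similar attractor E, and let μ be the self-similar measure associated with a positive probability vector (p_i)_{i=1}^N. Then there exists a constant C ∈ (0,1) such that for every n ≥ 1 and every basic net interval Δ ∈ ℱ_n contained in a basic net interval Δ̂ ∈ ℱ_{n−1}, one has μ(Δ) ≥ C·μ(Δ̂). Consequently, μ(Δ) ≥ C^n for every Δ ∈ ℱ_n. -/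
/-!
Expand `μ(Δ̂) = ∑_{|u| = n-1} p_u μ(f_u⁻¹ Δ̂)` and `μ(Δ)` alike, and compare term by term.
The measure lives on `(0,1)`: no mass escapes from `[0,1]` under the contractions, and `0`, `1`
carry no atoms since each is fixed by a single map. So a term vanishes unless
`f_u([0,1]) ⊇ Δ̂`. In that case total self-similarity puts a point of `E ∩ Δ` into a child
`f_{uj}(E)` with `f_{uj}([0,1]) ⊇ Δ`, and the finite-type condition confines the endpoints of `Δ`,
rescaled by `f_{uj}⁻¹`, to a finite set determined by `Γ`. Hence
`μ(f_u⁻¹ Δ) ≥ p_j μ(f_{uj}⁻¹ Δ)` is at least the least of finitely many positive numbers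
`p_j μ([t, t'])`, each positive because `(t, t')` meets `E` and so contains a cylinder
`f_w([0,1])`. Iterating along the chain of parents gives `μ(Δ) ≥ C^n`.
-/

open MeasureTheory Filter Set
open scoped ENNReal

/-- For a word `σ = σ₁…σₙ`, the composition `f_{σ₁} ∘ ⋯ ∘ f_{σₙ}`. -/
def iterMap {N : ℕ} (f : Fin N → ℝ → ℝ) : List (Fin N) → ℝ → ℝ
  | [] => id
  | i :: σ => f i ∘ iterMap f σ

/-- The set `P_n = {f_σ(0) : σ ∈ 𝒜_n} ∪ {f_σ(1) : σ ∈ 𝒜_n}` of endpoints of level-`n`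
iterated images of `[0,1]`. -/
def PnSet {N : ℕ} (f : Fin N → ℝ → ℝ) (n : ℕ) : Set ℝ :=
  {x | ∃ σ : List (Fin N), σ.length = n ∧ (iterMap f σ 0 = x ∨ iterMap f σ 1 = x)}

/-- `[a,b]` is a basic net interval of order `n`: `a < b` are consecutive points of `P_n`
and the open interval `(a,b)` meets the attractor `E`. -/
def IsNetInterval {N : ℕ} (f : Fin N → ℝ → ℝ) (E : Set ℝ) (n : ℕ) (a b : ℝ) : Prop :=
  a ∈ PnSet f n ∧ b ∈ PnSet f n ∧ a < b ∧
    (∀ y ∈ PnSet f n, y ≤ a ∨ b ≤ y) ∧ (Set.Ioo a b ∩ E).Nonempty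

open Topology

lemma exists_ofReal_le_of_finite {ι : Type*} {I : Set ι} (hI : I.Finite) {m : ι → ℝ≥0∞}
    (hm : ∀ i ∈ I, 0 < m i) : ∃ κ ∈ Ioo (0 : ℝ) 1, ∀ i ∈ I, ENNReal.ofReal κ ≤ m i := by
  have hofReal : Tendsto ENNReal.ofReal (𝓝 0) (𝓝 0) := by
    simpa using ENNReal.continuous_ofReal.tendsto 0
  have hev : ∀ᶠ κ in 𝓝[>] (0 : ℝ), κ ∈ Ioo 0 1 ∧ ∀ i ∈ I, ENNReal.ofReal κ ≤ m i :=
    Filter.Eventually.and (Ioo_mem_nhdsGT zero_lt_one) <| nhdsWithin_le_nhds <|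
      hI.eventually_all.2 fun i hi => (hofReal.eventually (gt_mem_nhds (hm i hi))).mono
        fun _ h => h.le
  obtain ⟨κ, hκ, h⟩ := hev.exists
  exact ⟨κ, hκ, h⟩

lemma lt_one_of_sum_eq_one {ι : Type*} [Fintype ι] [Nontrivial ι] {p : ι → ℝ}
    (hp : ∀ i, 0 < p i) (hp1 : ∑ i, p i = 1) (i : ι) : p i < 1 := by
  obtain ⟨j, hj⟩ := exists_ne i
  exact hp1 ▸ Finset.single_lt_sum hj (Finset.mem_univ i) (Finset.mem_univ j) (hp j)
    fun k _ _ => (hp k).le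

section WordMaps

variable {N : ℕ} {f : Fin N → ℝ → ℝ} {ρ : ℝ} {b : Fin N → ℝ}

lemma iterMap_append (u v : List (Fin N)) :
    iterMap f (u ++ v) = iterMap f u ∘ iterMap f v := by
  induction u with
  | nil => rfl
  | cons i u ih => simp [iterMap, ih, Function.comp_assoc]

lemma iterMap_apply (hf : ∀ i x, f i x = ρ * x + b i) (w : List (Fin N)) (x : ℝ) :
    iterMap f w x = ρ ^ w.length * x + iterMap f w 0 := by
  induction w generalizing x with
  | nil => simp [iterMap]
  | cons i w ih =>
    simp only [iterMap, Function.comp_apply, List.length_cons, hf, ih x]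
    ring

lemma iterMap_eq_affine (hf : ∀ i x, f i x = ρ * x + b i) (w : List (Fin N)) :
    iterMap f w = fun x => ρ ^ w.length * x + iterMap f w 0 :=
  funext (iterMap_apply hf w)

lemma iterMap_one (hf : ∀ i x, f i x = ρ * x + b i) (w : List (Fin N)) :
    iterMap f w 1 = iterMap f w 0 + ρ ^ w.length := by
  rw [iterMap_apply hf w]; ring

lemma strictMono_iterMap (hf : ∀ i x, f i x = ρ * x + b i) (hρ : 0 < ρ) (w : List (Fin N)) :
    StrictMono (iterMap f w) := by
  rw [iterMap_eq_affine hf w]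
  exact fun x y hxy => by dsimp only; gcongr

lemma measurable_iterMap (hf : ∀ i x, f i x = ρ * x + b i) (w : List (Fin N)) :
    Measurable (iterMap f w) := by
  rw [iterMap_eq_affine hf w]
  fun_prop

lemma measurable_of_affine (hf : ∀ i x, f i x = ρ * x + b i) (i : Fin N) : Measurable (f i) := by
  rw [funext (hf i)]
  fun_prop

lemma iterMap_preimage_Icc (hf : ∀ i x, f i x = ρ * x + b i) (hρ : 0 < ρ) (w : List (Fin N))
    (a a' : ℝ) : iterMap f w ⁻¹' Icc a a' =
      Icc ((a - iterMap f w 0) / ρ ^ w.length) ((a' - iterMap f w 0) / ρ ^ w.length) := by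
  ext t
  have hρw : 0 < ρ ^ w.length := pow_pos hρ _
  rw [mem_preimage, iterMap_apply hf w t, mem_Icc, mem_Icc, div_le_iff₀ hρw, le_div_iff₀ hρw]
  constructor <;> rintro ⟨h₁, h₂⟩ <;> constructor <;> linarith

lemma iterMap_image_Icc (hf : ∀ i x, f i x = ρ * x + b i) (hρ : 0 < ρ) (w : List (Fin N)) :
    iterMap f w '' Icc 0 1 = Icc (iterMap f w 0) (iterMap f w 1) := by
  conv_lhs => rw [iterMap_eq_affine hf w]
  rw [image_affine_Icc' (pow_pos hρ _), iterMap_one hf]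
  simp [add_comm]

lemma iterMap_mapsTo_Icc (hf : ∀ i x, f i x = ρ * x + b i) (hρ : 0 < ρ)
    (hb : ∀ i, b i ∈ Icc 0 (1 - ρ)) (w : List (Fin N)) :
    MapsTo (iterMap f w) (Icc 0 1) (Icc 0 1) := by
  induction w with
  | nil => exact mapsTo_id _
  | cons i w ih =>
    refine MapsTo.comp (fun x hx => ?_) ih
    obtain ⟨hb0, hb1⟩ := hb i
    constructor <;> rw [hf] <;> nlinarith [hx.1, hx.2]

end WordMaps

section NetIntervals

variable {N : ℕ} {f : Fin N → ℝ → ℝ} {ρ : ℝ} {b : Fin N → ℝ} {E : Set ℝ}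

lemma mem_PnSet_zero (w : List (Fin N)) : iterMap f w 0 ∈ PnSet f w.length := ⟨w, rfl, .inl rfl⟩

lemma mem_PnSet_one (w : List (Fin N)) : iterMap f w 1 ∈ PnSet f w.length := ⟨w, rfl, .inr rfl⟩

lemma PnSet_finite (n : ℕ) : (PnSet f n).Finite := by
  have hW := List.finite_length_eq (Fin N) n
  refine ((hW.image fun w => iterMap f w 0).union (hW.image fun w => iterMap f w 1)).subset ?_
  rintro x ⟨w, hw, rfl | rfl⟩
  exacts [.inl ⟨w, hw, rfl⟩, .inr ⟨w, hw, rfl⟩]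

lemma PnSet_subset_Icc (hf : ∀ i x, f i x = ρ * x + b i) (hρ : 0 < ρ)
    (hb : ∀ i, b i ∈ Icc 0 (1 - ρ)) (n : ℕ) : PnSet f n ⊆ Icc 0 1 := by
  rintro x ⟨w, -, rfl | rfl⟩
  exacts [iterMap_mapsTo_Icc hf hρ hb w (by simp), iterMap_mapsTo_Icc hf hρ hb w (by simp)]

lemma PnSet_zero : PnSet f 0 = {0, 1} := by
  ext x
  simp [PnSet, iterMap, eq_comm]

lemma iterMap_replicate_of_fixed {i : Fin N} {x : ℝ} (hx : f i x = x) (n : ℕ) :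
    iterMap f (List.replicate n i) x = x := by
  induction n with
  | zero => rfl
  | succ n ih => simp [List.replicate_succ, iterMap, ih, hx]

lemma PnSet_mono {i₀ i₁ : Fin N} (h₀ : f i₀ 0 = 0) (h₁ : f i₁ 1 = 1) (n : ℕ) :
    PnSet f n ⊆ PnSet f (n + 1) := by
  rintro x ⟨w, rfl, rfl | rfl⟩
  · refine ⟨w ++ [i₀], by simp, .inl ?_⟩
    simp [iterMap_append, iterMap, h₀]
  · refine ⟨w ++ [i₁], by simp, .inr ?_⟩
    simp [iterMap_append, iterMap, h₁]

lemma IsNetInterval.eq_of_zero {a a' : ℝ} (h : IsNetInterval f E 0 a a') : a = 0 ∧ a' = 1 := by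
  obtain ⟨ha, ha', hlt, -⟩ := h
  rw [PnSet_zero] at ha ha'
  rcases ha with rfl | rfl <;> rcases ha' with rfl | rfl <;>
    first | exact ⟨rfl, rfl⟩ | norm_num at hlt

lemma zero_mem_PnSet {i₀ : Fin N} (h₀ : f i₀ 0 = 0) (n : ℕ) : (0 : ℝ) ∈ PnSet f n :=
  ⟨List.replicate n i₀, List.length_replicate .., .inl (iterMap_replicate_of_fixed h₀ n)⟩

lemma one_mem_PnSet {i₁ : Fin N} (h₁ : f i₁ 1 = 1) (n : ℕ) : (1 : ℝ) ∈ PnSet f n :=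
  ⟨List.replicate n i₁, List.length_replicate .., .inr (iterMap_replicate_of_fixed h₁ n)⟩

lemma IsNetInterval.exists_parent (hf : ∀ i x, f i x = ρ * x + b i) (hρ : 0 < ρ)
    (hb : ∀ i, b i ∈ Icc 0 (1 - ρ)) {i₀ i₁ : Fin N} (h₀ : f i₀ 0 = 0) (h₁ : f i₁ 1 = 1)
    {n : ℕ} {a a' : ℝ} (h : IsNetInterval f E (n + 1) a a') :
    ∃ c c', IsNetInterval f E n c c' ∧ Icc a a' ⊆ Icc c c' := by
  obtain ⟨ha, ha', hlt, hsep, x, hx, hxE⟩ := h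
  obtain ⟨c, ⟨hcP, hca⟩, hc⟩ := Set.exists_max_image {y ∈ PnSet f n | y ≤ a} id
    ((PnSet_finite n).subset fun _ hy => hy.1)
    ⟨0, zero_mem_PnSet h₀ n, (PnSet_subset_Icc hf hρ hb _ ha).1⟩
  obtain ⟨c', ⟨hcP', hac'⟩, hc'⟩ := Set.exists_min_image {y ∈ PnSet f n | a' ≤ y} id
    ((PnSet_finite n).subset fun _ hy => hy.1)
    ⟨1, one_mem_PnSet h₁ n, (PnSet_subset_Icc hf hρ hb _ ha').2⟩
  refine ⟨c, c', ⟨hcP, hcP', by linarith, fun y hy => ?_, x,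
    ⟨by linarith [hx.1], by linarith [hx.2]⟩, hxE⟩, Icc_subset_Icc hca hac'⟩
  rcases hsep y (PnSet_mono h₀ h₁ n hy) with hya | hay
  exacts [.inl (hc y ⟨hy, hya⟩), .inr (hc' y ⟨hy, hay⟩)]

lemma IsNetInterval.iterMap_bounds_of_overlap {n : ℕ} {a a' : ℝ} (h : IsNetInterval f E n a a')
    {w : List (Fin N)} (hw : w.length = n) (h₀ : iterMap f w 0 < a') (h₁ : a < iterMap f w 1) :
    iterMap f w 0 ≤ a ∧ a' ≤ iterMap f w 1 := by
  subst hw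
  exact ⟨(h.2.2.2.1 _ (mem_PnSet_zero w)).resolve_right h₀.not_ge,
    (h.2.2.2.1 _ (mem_PnSet_one w)).resolve_left h₁.not_ge⟩

end NetIntervals

section Attractor

variable {N : ℕ} {f : Fin N → ℝ → ℝ} {ρ : ℝ} {b : Fin N → ℝ} {E : Set ℝ}

lemma attractor_subset_Icc (hf : ∀ i x, f i x = ρ * x + b i) (hρ : ρ ∈ Ioo 0 1)
    (hb : ∀ i, b i ∈ Icc 0 (1 - ρ)) (hEcpt : IsCompact E) (hEne : E.Nonempty)
    (hE : E = ⋃ i, f i '' E) : E ⊆ Icc 0 1 := by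
  have hsup : sSup E ≤ 1 := by
    have hmem : sSup E ∈ ⋃ i, f i '' E := hE ▸ hEcpt.sSup_mem hEne
    obtain ⟨i, z, hz, hzeq⟩ := mem_iUnion.1 hmem
    have hzle : z ≤ sSup E := le_csSup hEcpt.bddAbove hz
    rw [hf] at hzeq
    nlinarith [(hb i).2, hρ.1, hρ.2]
  have hinf : 0 ≤ sInf E := by
    have hmem : sInf E ∈ ⋃ i, f i '' E := hE ▸ hEcpt.sInf_mem hEne
    obtain ⟨i, z, hz, hzeq⟩ := mem_iUnion.1 hmem
    have hzle : sInf E ≤ z := csInf_le hEcpt.bddBelow hz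
    rw [hf] at hzeq
    nlinarith [(hb i).1, hρ.1, hρ.2]
  exact fun x hx => ⟨hinf.trans (csInf_le hEcpt.bddBelow hx),
    (le_csSup hEcpt.bddAbove hx).trans hsup⟩

lemma exists_word_mem_image (hE : E = ⋃ i, f i '' E) (ℓ : ℕ) {y : ℝ} (hy : y ∈ E) :
    ∃ w : List (Fin N), w.length = ℓ ∧ y ∈ iterMap f w '' E := by
  induction ℓ generalizing y with
  | zero => exact ⟨[], rfl, y, hy, rfl⟩
  | succ ℓ ih =>
    rw [hE] at hy
    obtain ⟨i, z, hz, rfl⟩ := mem_iUnion.1 hy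
    obtain ⟨w, hw, z', hz', rfl⟩ := ih hz
    exact ⟨i :: w, by simp [hw], z', hz', rfl⟩

lemma exists_word_mapsTo_Icc (hf : ∀ i x, f i x = ρ * x + b i) (hρ : ρ ∈ Ioo 0 1)
    (hEsub : E ⊆ Icc 0 1) (hE : E = ⋃ i, f i '' E) {A B y : ℝ} (hy : y ∈ E) (hAy : A < y)
    (hyB : y < B) : ∃ w : List (Fin N), MapsTo (iterMap f w) (Icc 0 1) (Icc A B) := by
  obtain ⟨ℓ, hℓ⟩ := exists_pow_lt_of_lt_one (lt_min (sub_pos.2 hAy) (sub_pos.2 hyB)) hρ.2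
  obtain ⟨w, rfl, z, hz, rfl⟩ := exists_word_mem_image hE ℓ hy
  refine ⟨w, fun x hx => ?_⟩
  have hz01 := hEsub hz
  have hρℓ : 0 < ρ ^ w.length := pow_pos hρ.1 _
  rw [iterMap_apply hf w x]
  rw [iterMap_apply hf w z, lt_min_iff] at hℓ
  constructor <;> nlinarith [hx.1, hx.2, hz01.1, hz01.2]

end Attractor

section SelfSimilarMeasure

variable {N : ℕ} {f : Fin N → ℝ → ℝ} {p : Fin N → ℝ} {μ : Measure ℝ}

lemma measure_eq_sum_preimage (hfm : ∀ i, Measurable (f i))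
    (hμ : μ = ∑ i, ENNReal.ofReal (p i) • μ.map (f i)) {A : Set ℝ} (hA : MeasurableSet A) :
    μ A = ∑ i, ENNReal.ofReal (p i) * μ (f i ⁻¹' A) := by
  conv_lhs => rw [hμ]
  simp only [Measure.coe_finsetSum, Finset.sum_apply, Measure.smul_apply,
    Measure.map_apply (hfm _) hA, smul_eq_mul]

lemma ofReal_mul_measure_preimage_le (hfm : ∀ i, Measurable (f i))
    (hμ : μ = ∑ i, ENNReal.ofReal (p i) • μ.map (f i)) {A : Set ℝ} (hA : MeasurableSet A)
    (i : Fin N) : ENNReal.ofReal (p i) * μ (f i ⁻¹' A) ≤ μ A :=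
  (measure_eq_sum_preimage hfm hμ hA).symm ▸
    Finset.single_le_sum (f := fun j => ENNReal.ofReal (p j) * μ (f j ⁻¹' A))
      (fun _ _ => zero_le) (Finset.mem_univ i)

lemma measure_le_of_forall_preimage_subset (hfm : ∀ i, Measurable (f i)) (hp : ∀ i, 0 ≤ p i)
    (hp1 : ∑ i, p i = 1) (hμ : μ = ∑ i, ENNReal.ofReal (p i) • μ.map (f i)) {A B : Set ℝ}
    (hA : MeasurableSet A) (hAB : ∀ i, f i ⁻¹' A ⊆ B) : μ A ≤ μ B :=
  calc μ A = ∑ i, ENNReal.ofReal (p i) * μ (f i ⁻¹' A) := measure_eq_sum_preimage hfm hμ hA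
    _ ≤ ∑ i, ENNReal.ofReal (p i) * μ B := by gcongr with i; exact hAB i
    _ = μ B := by
      rw [← Finset.sum_mul, ← ENNReal.ofReal_sum_of_nonneg fun i _ => hp i, hp1,
        ENNReal.ofReal_one, one_mul]

lemma measure_singleton_eq_zero_of_preimage [IsFiniteMeasure μ] (hfm : ∀ i, Measurable (f i))
    (hμ : μ = ∑ i, ENNReal.ofReal (p i) • μ.map (f i)) {i : Fin N} (hpi : p i < 1) {x₀ : ℝ}
    (hfix : f i ⁻¹' {x₀} = {x₀}) (hnull : ∀ j ≠ i, μ (f j ⁻¹' {x₀}) = 0) : μ {x₀} = 0 := by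
  have heq : μ {x₀} = ENNReal.ofReal (p i) * μ {x₀} := by
    conv_lhs => rw [measure_eq_sum_preimage hfm hμ (measurableSet_singleton x₀)]
    rw [Finset.sum_eq_single i (fun j _ hj => by rw [hnull j hj, mul_zero]) (by simp), hfix]
  by_contra hne
  have hlt : ENNReal.ofReal (p i) * μ {x₀} < 1 * μ {x₀} :=
    ENNReal.mul_lt_mul_left hne (measure_ne_top μ _) (ENNReal.ofReal_lt_one.2 hpi)
  rw [one_mul, ← heq] at hlt
  exact hlt.false

lemma mul_measure_le_of_forall_words (hfm : ∀ i, Measurable (f i))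
    (hμ : μ = ∑ i, ENNReal.ofReal (p i) • μ.map (f i)) (c : ℝ≥0∞) (k : ℕ) {A B : Set ℝ}
    (hA : MeasurableSet A) (hB : MeasurableSet B)
    (h : ∀ u : List (Fin N), u.length = k →
      c * μ (iterMap f u ⁻¹' B) ≤ μ (iterMap f u ⁻¹' A)) :
    c * μ B ≤ μ A := by
  induction k generalizing A B with
  | zero => simpa [iterMap] using h [] rfl
  | succ k ih =>
    rw [measure_eq_sum_preimage hfm hμ hA, measure_eq_sum_preimage hfm hμ hB, Finset.mul_sum]
    refine Finset.sum_le_sum fun i _ => ?_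
    rw [mul_left_comm]
    exact mul_le_mul_right (ih (hfm i hA) (hfm i hB) fun u hu => h (i :: u) (by simp [hu])) _

lemma measure_pos_of_mapsTo (hfm : ∀ i, Measurable (f i)) (hp : ∀ i, 0 < p i)
    (hμ : μ = ∑ i, ENNReal.ofReal (p i) • μ.map (f i)) (hI : 0 < μ (Icc 0 1))
    (w : List (Fin N)) {A : Set ℝ} (hA : MeasurableSet A)
    (hw : MapsTo (iterMap f w) (Icc 0 1) A) : 0 < μ A := by
  induction w generalizing A with
  | nil => exact hI.trans_le (measure_mono hw)
  | cons i w ih =>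
    have hpos := ih (hfm i hA) fun x hx => hw hx
    exact (ENNReal.mul_pos (by simpa using hp i) hpos.ne').trans_le
      (ofReal_mul_measure_preimage_le hfm hμ hA i)

end SelfSimilarMeasure

section Support

variable {N : ℕ} {f : Fin N → ℝ → ℝ} {ρ : ℝ} {b : Fin N → ℝ} {p : Fin N → ℝ} {μ : Measure ℝ}

/-- The maps send `[-R/ρ, 1 + R/ρ]` into `[-R, 1 + R]`, so the mass outside `[-R, 1 + R]` is
at most the mass outside `[-R/ρ^k, 1 + R/ρ^k]`, which tends to `0`. -/
lemma ae_mem_Icc_zero_one [IsFiniteMeasure μ] (hf : ∀ i x, f i x = ρ * x + b i)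
    (hρ : ρ ∈ Ioo 0 1) (hb : ∀ i, b i ∈ Icc 0 (1 - ρ)) (hp : ∀ i, 0 ≤ p i)
    (hp1 : ∑ i, p i = 1) (hμ : μ = ∑ i, ENNReal.ofReal (p i) • μ.map (f i)) :
    ∀ᵐ x ∂μ, x ∈ Icc 0 1 := by
  obtain ⟨hρ0, hρ1⟩ := hρ
  set D : ℝ → Set ℝ := fun R => (Icc (-R) (1 + R))ᶜ
  have hstep : ∀ R, 0 ≤ R → μ (D R) ≤ μ (D (R / ρ)) := fun R hR =>
    measure_le_of_forall_preimage_subset (measurable_of_affine hf) hp hp1 hμ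
      measurableSet_Icc.compl fun i x hx hx' => hx (by
        have hRρ : R / ρ * ρ = R := div_mul_cancel₀ R hρ0.ne'
        obtain ⟨hb0, hb1⟩ := hb i
        constructor <;> rw [hf] <;> nlinarith [hx'.1, hx'.2])
  have hiter : ∀ R, 0 ≤ R → ∀ k : ℕ, μ (D R) ≤ μ (D (R / ρ ^ k)) := by
    intro R hR k
    induction k with
    | zero => simp
    | succ k ih =>
      rw [pow_succ, ← div_div]
      exact ih.trans (hstep _ (by positivity))
  have hlim : Tendsto (fun T => μ (D T)) atTop (𝓝 0) := by
    have hempty : ⋂ T, D T = ∅ := by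
      refine eq_empty_of_forall_notMem fun x hx => mem_iInter.1 hx |x| ?_
      exact ⟨by linarith [neg_abs_le x], by linarith [le_abs_self x]⟩
    have h := tendsto_measure_iInter_atTop (μ := μ) (s := D)
      (fun _ => measurableSet_Icc.compl.nullMeasurableSet)
      (fun R T hRT => compl_subset_compl.2 (Icc_subset_Icc (by linarith) (by linarith)))
      ⟨0, measure_ne_top _ _⟩
    rwa [hempty, measure_empty] at h
  have hnull : ∀ R, 0 < R → ∀ᵐ x ∂μ, x ∈ Icc (-R) (1 + R) := by
    intro R hR
    have hgrow : Tendsto (fun k : ℕ => R / ρ ^ k) atTop atTop := by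
      simpa [div_eq_mul_inv, inv_pow] using
        (tendsto_pow_atTop_atTop_of_one_lt (one_lt_inv₀ hρ0 |>.2 hρ1)).const_mul_atTop hR
    exact le_antisymm (ge_of_tendsto' (hlim.comp hgrow) (hiter R hR.le)) zero_le
  have hρk := tendsto_pow_atTop_nhds_zero_of_lt_one hρ0.le hρ1
  filter_upwards [ae_all_iff.2 fun k : ℕ => hnull (ρ ^ k) (pow_pos hρ0 k)] with x hx
  exact ⟨by simpa using le_of_tendsto' hρk.neg fun k => (hx k).1,
    by simpa using ge_of_tendsto' (tendsto_const_nhds.add hρk) fun k => (hx k).2⟩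

lemma ae_mem_Ioo_zero_one [IsFiniteMeasure μ] (hf : ∀ i x, f i x = ρ * x + b i)
    (hρ : ρ ∈ Ioo 0 1) (hb : ∀ i, b i ∈ Icc 0 (1 - ρ)) (hinj : Function.Injective b)
    {i₀ i₁ : Fin N} (hb₀ : b i₀ = 0) (hb₁ : b i₁ = 1 - ρ) (hp : ∀ i, 0 < p i)
    (hp_lt : ∀ i, p i < 1) (hp1 : ∑ i, p i = 1)
    (hμ : μ = ∑ i, ENNReal.ofReal (p i) • μ.map (f i)) :
    ∀ᵐ x ∂μ, x ∈ Ioo 0 1 := by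
  have hI := ae_mem_Icc_zero_one hf hρ hb (fun i => (hp i).le) hp1 hμ
  have hnull : ∀ {s : Set ℝ}, s ⊆ (Icc 0 1)ᶜ → μ s = 0 := fun hs =>
    measure_mono_null hs (ae_iff.1 hI)
  have h₀ : μ {0} = 0 := by
    refine measure_singleton_eq_zero_of_preimage (measurable_of_affine hf) hμ (hp_lt i₀) ?_
      fun j hj => hnull fun x hx h01 => ?_
    · ext x
      simp only [mem_preimage, mem_singleton_iff, hf, hb₀, add_zero]
      exact ⟨fun h => mul_left_cancel₀ hρ.1.ne' (by linarith), fun h => by rw [h, mul_zero]⟩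
    · have hbj : 0 < b j := lt_of_le_of_ne (hb j).1 (hb₀ ▸ (hinj.ne hj).symm)
      simp only [mem_preimage, mem_singleton_iff, hf] at hx
      nlinarith [h01.1, hρ.1]
  have h₁ : μ {1} = 0 := by
    refine measure_singleton_eq_zero_of_preimage (measurable_of_affine hf) hμ (hp_lt i₁) ?_
      fun j hj => hnull fun x hx h01 => ?_
    · ext x
      simp only [mem_preimage, mem_singleton_iff, hf, hb₁]
      exact ⟨fun h => mul_left_cancel₀ hρ.1.ne' (by linarith), fun h => by rw [h]; ring⟩
    · have hbj : b j < 1 - ρ := lt_of_le_of_ne (hb j).2 (hb₁ ▸ hinj.ne hj)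
      simp only [mem_preimage, mem_singleton_iff, hf] at hx
      nlinarith [h01.2, hρ.1]
  filter_upwards [hI, measure_eq_zero_iff_ae_notMem.1 h₀, measure_eq_zero_iff_ae_notMem.1 h₁]
    with x hx hx₀ hx₁
  exact ⟨lt_of_le_of_ne hx.1 (Ne.symm hx₀), lt_of_le_of_ne hx.2 hx₁⟩

end Support

section FiniteType

variable {N : ℕ} {f : Fin N → ℝ → ℝ} {ρ : ℝ} {b : Fin N → ℝ}

def IsFiniteTypeWith (f : Fin N → ℝ → ℝ) (ρ : ℝ) (Γ : Finset ℝ) : Prop :=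
  ∀ n : ℕ, 1 ≤ n → ∀ σ ω : List (Fin N), σ.length = n → ω.length = n →
    |iterMap f σ 0 - iterMap f ω 0| / ρ ^ n ∈ Γ ∨ 1 < |iterMap f σ 0 - iterMap f ω 0| / ρ ^ n

/-- The possible positions of a point of `P_n` inside a level-`n` interval `f_w([0,1])`,
after rescaling that interval to `[0,1]`. -/
def normalizedPositions (Γ : Finset ℝ) : Set ℝ := {t | t ∈ Γ ∨ 1 - t ∈ Γ}

lemma normalizedPositions_finite (Γ : Finset ℝ) : (normalizedPositions Γ).Finite :=
  (Γ.finite_toSet.union (Γ.finite_toSet.image (1 - ·))).subset fun t ht =>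
    ht.imp id fun h => ⟨1 - t, h, sub_sub_cancel 1 t⟩

lemma IsFiniteTypeWith.normalized_mem (hf : ∀ i x, f i x = ρ * x + b i) (hρ : 0 < ρ)
    {Γ : Finset ℝ} (hΓ : IsFiniteTypeWith f ρ Γ) {w : List (Fin N)} (hw : w ≠ [])
    {e : ℝ} (he : e ∈ PnSet f w.length) (h₀ : iterMap f w 0 ≤ e) (h₁ : e ≤ iterMap f w 1) :
    (e - iterMap f w 0) / ρ ^ w.length ∈ normalizedPositions Γ := by
  obtain ⟨ω, hω, he⟩ := he
  have hρw : 0 < ρ ^ w.length := pow_pos hρ _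
  rw [iterMap_one hf] at h₁
  set t := (e - iterMap f w 0) / ρ ^ w.length with ht
  have hdist : |iterMap f ω 0 - iterMap f w 0| / ρ ^ w.length = t ∨
      |iterMap f ω 0 - iterMap f w 0| / ρ ^ w.length = 1 - t := by
    rcases he with he | he
    · exact .inl (by rw [he, abs_of_nonneg (by linarith)])
    · have hω₀ : iterMap f ω 0 = e - ρ ^ w.length := by rw [← he, iterMap_one hf, hω]; ring
      right
      rw [hω₀, abs_of_nonpos (by linarith), ht]
      field_simp
      ring
  have ht₀ : 0 ≤ t := div_nonneg (by linarith) hρw.le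
  have ht₁ : t ≤ 1 := (div_le_one hρw).2 (by linarith)
  obtain hd | hd := hdist <;>
    rcases hΓ _ (List.length_pos_iff.2 hw) ω w hω rfl with h | h <;> rw [hd] at h
  exacts [.inl h, absurd h (by linarith), .inr h, absurd h (by linarith)]

end FiniteType

section NetIntervalMeasure

variable {N : ℕ} {f : Fin N → ℝ → ℝ} {ρ : ℝ} {b : Fin N → ℝ} {p : Fin N → ℝ} {μ : Measure ℝ}
  {E : Set ℝ} {Γ : Finset ℝ} {κ : ℝ}

/-- By total self-similarity some child `f_{uj}([0,1])` contains `[a, a']`; rescaled by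
`f_{uj}⁻¹`, its endpoints are normalized positions, so `hκ` applies. -/
lemma ofReal_le_measure_preimage_of_subset (hf : ∀ i x, f i x = ρ * x + b i) (hρ : 0 < ρ)
    (hE : E = ⋃ i, f i '' E) (hEsub : E ⊆ Icc 0 1)
    (hTSS : ∀ ω : List (Fin N), ω ≠ [] → iterMap f ω '' E = iterMap f ω '' Icc 0 1 ∩ E)
    (hμ : μ = ∑ i, ENNReal.ofReal (p i) • μ.map (f i)) (hΓ : IsFiniteTypeWith f ρ Γ)
    (hκ : ∀ j, ∀ t ∈ normalizedPositions Γ, ∀ t' ∈ normalizedPositions Γ, t < t' →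
      (E ∩ Ioo t t').Nonempty → ENNReal.ofReal κ ≤ ENNReal.ofReal (p j) * μ (Icc t t'))
    {k : ℕ} {a a' : ℝ} (hΔ : IsNetInterval f E (k + 1) a a') {u : List (Fin N)}
    (hu : u.length = k) (h₀ : iterMap f u 0 ≤ a) (h₁ : a' ≤ iterMap f u 1) :
    ENNReal.ofReal κ ≤ μ (iterMap f u ⁻¹' Icc a a') := by
  obtain ⟨x, hx, hxE⟩ := hΔ.2.2.2.2
  obtain ⟨z, hz, rfl⟩ : x ∈ iterMap f u '' E := by
    rcases eq_or_ne u [] with rfl | hu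
    · exact ⟨x, hxE, rfl⟩
    · rw [hTSS u hu, iterMap_image_Icc hf hρ]
      exact ⟨⟨by linarith [hx.1], by linarith [hx.2]⟩, hxE⟩
  obtain ⟨j, z', hz', rfl⟩ := mem_iUnion.1 (hE ▸ hz)
  set w := u ++ [j]
  have hw : w.length = k + 1 := by simp [w, hu]
  have hwz : iterMap f w z' = iterMap f u (f j z') := by simp [w, iterMap_append, iterMap]
  have hmono := strictMono_iterMap hf hρ w
  obtain ⟨hwa, hwa'⟩ := hΔ.iterMap_bounds_of_overlap hw
    ((hmono.monotone (hEsub hz').1).trans_lt (hwz ▸ hx.2))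
    (hx.1.trans_le (hwz ▸ hmono.monotone (hEsub hz').2))
  have hwL : 0 < ρ ^ w.length := pow_pos hρ _
  have hnorm := fun {e} (he : e ∈ PnSet f (k + 1)) (h₀ : iterMap f w 0 ≤ e)
    (h₁ : e ≤ iterMap f w 1) => hΓ.normalized_mem hf hρ (by simp [w]) (hw ▸ he) h₀ h₁
  have hpre : f j ⁻¹' (iterMap f u ⁻¹' Icc a a') = iterMap f w ⁻¹' Icc a a' := by
    simp [w, iterMap_append, iterMap, preimage_comp]
  calc ENNReal.ofReal κ ≤ ENNReal.ofReal (p j) * μ (iterMap f w ⁻¹' Icc a a') := by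
        rw [iterMap_preimage_Icc hf hρ]
        refine hκ j _ (hnorm hΔ.1 hwa (hΔ.2.2.1.le.trans hwa'))
          _ (hnorm hΔ.2.1 (hwa.trans hΔ.2.2.1.le) hwa') ?_ ⟨z', hz', ?_, ?_⟩
        · exact div_lt_div_of_pos_right (by linarith [hΔ.2.2.1]) hwL
        · rw [div_lt_iff₀ hwL]
          linarith [hx.1, iterMap_apply hf w z']
        · rw [lt_div_iff₀ hwL]
          linarith [hx.2, iterMap_apply hf w z']
    _ ≤ μ (iterMap f u ⁻¹' Icc a a') := by
        rw [← hpre]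
        exact ofReal_mul_measure_preimage_le (measurable_of_affine hf) hμ
          (measurable_iterMap hf u measurableSet_Icc) j

lemma ofReal_mul_measure_le_of_subset_parent [IsProbabilityMeasure μ]
    (hf : ∀ i x, f i x = ρ * x + b i) (hρ : 0 < ρ)
    (hE : E = ⋃ i, f i '' E) (hEsub : E ⊆ Icc 0 1)
    (hTSS : ∀ ω : List (Fin N), ω ≠ [] → iterMap f ω '' E = iterMap f ω '' Icc 0 1 ∩ E)
    (hμ : μ = ∑ i, ENNReal.ofReal (p i) • μ.map (f i)) (hae : ∀ᵐ x ∂μ, x ∈ Ioo 0 1)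
    (hΓ : IsFiniteTypeWith f ρ Γ)
    (hκ : ∀ j, ∀ t ∈ normalizedPositions Γ, ∀ t' ∈ normalizedPositions Γ, t < t' →
      (E ∩ Ioo t t').Nonempty → ENNReal.ofReal κ ≤ ENNReal.ofReal (p j) * μ (Icc t t'))
    {k : ℕ} {a a' c c' : ℝ} (hΔ : IsNetInterval f E (k + 1) a a')
    (hΔ' : IsNetInterval f E k c c') (hsub : Icc a a' ⊆ Icc c c') :
    ENNReal.ofReal κ * μ (Icc c c') ≤ μ (Icc a a') := by
  refine mul_measure_le_of_forall_words (measurable_of_affine hf) hμ _ k measurableSet_Icc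
    measurableSet_Icc fun u hu => ?_
  by_cases hin : iterMap f u 0 < c' ∧ c < iterMap f u 1
  · obtain ⟨h₀, h₁⟩ := hΔ'.iterMap_bounds_of_overlap hu hin.1 hin.2
    obtain ⟨hca, ha'c'⟩ := (Icc_subset_Icc_iff hΔ.2.2.1.le).1 hsub
    calc ENNReal.ofReal κ * μ (iterMap f u ⁻¹' Icc c c') ≤ ENNReal.ofReal κ * 1 := by
          gcongr
          exact prob_le_one
      _ ≤ μ (iterMap f u ⁻¹' Icc a a') := by
          rw [mul_one]
          exact ofReal_le_measure_preimage_of_subset hf hρ hE hEsub hTSS hμ hΓ hκ hΔ hu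
            (h₀.trans hca) (ha'c'.trans h₁)
  · have hmono := strictMono_iterMap hf hρ u
    have hout : iterMap f u ⁻¹' Icc c c' ⊆ {x | x ∉ Ioo 0 1} := fun t ht ht' =>
      hin ⟨(hmono ht'.1).trans_le ht.2, ht.1.trans_lt (hmono ht'.2)⟩
    rw [measure_mono_null hout (ae_iff.1 hae), mul_zero]
    exact zero_le

lemma exists_ofReal_le_mul_measure_Icc (hf : ∀ i x, f i x = ρ * x + b i) (hρ : ρ ∈ Ioo 0 1)
    (hE : E = ⋃ i, f i '' E) (hEsub : E ⊆ Icc 0 1) (hp : ∀ i, 0 < p i)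
    (hμ : μ = ∑ i, ENNReal.ofReal (p i) • μ.map (f i)) (hI : 0 < μ (Icc 0 1)) :
    ∃ κ ∈ Ioo (0 : ℝ) 1, ∀ j, ∀ t ∈ normalizedPositions Γ, ∀ t' ∈ normalizedPositions Γ,
      t < t' → (E ∩ Ioo t t').Nonempty →
        ENNReal.ofReal κ ≤ ENNReal.ofReal (p j) * μ (Icc t t') := by
  have hV := normalizedPositions_finite Γ
  obtain ⟨κ, hκ, hle⟩ := exists_ofReal_le_of_finite
    (I := {q : Fin N × ℝ × ℝ | q.2.1 ∈ normalizedPositions Γ ∧ q.2.2 ∈ normalizedPositions Γ ∧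
      q.2.1 < q.2.2 ∧ (E ∩ Ioo q.2.1 q.2.2).Nonempty})
    (m := fun q => ENNReal.ofReal (p q.1) * μ (Icc q.2.1 q.2.2))
    ((finite_univ.prod (hV.prod hV)).subset fun q hq => ⟨mem_univ _, hq.1, hq.2.1⟩)
    (by
      rintro ⟨j, t, t'⟩ ⟨-, -, -, y, hyE, hy⟩
      obtain ⟨w, hw⟩ := exists_word_mapsTo_Icc hf hρ hEsub hE hyE hy.1 hy.2
      exact ENNReal.mul_pos (ENNReal.ofReal_pos.2 (hp j)).ne'
        (measure_pos_of_mapsTo (measurable_of_affine hf) hp hμ hI w measurableSet_Icc hw).ne')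
  exact ⟨κ, hκ, fun j t ht t' ht' htt' hne => hle (j, t, t') ⟨ht, ht', htt', hne⟩⟩

lemma ofReal_pow_le_measure_of_netInterval (hf : ∀ i x, f i x = ρ * x + b i) (hρ : 0 < ρ)
    (hb : ∀ i, b i ∈ Icc 0 (1 - ρ)) {i₀ i₁ : Fin N} (h₀ : f i₀ 0 = 0) (h₁ : f i₁ 1 = 1)
    (hI : μ (Icc 0 1) = 1) (hκ : 0 ≤ κ)
    (hstep : ∀ {k a a' c c'}, IsNetInterval f E (k + 1) a a' → IsNetInterval f E k c c' →
      Icc a a' ⊆ Icc c c' → ENNReal.ofReal κ * μ (Icc c c') ≤ μ (Icc a a')) (n : ℕ)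
    {a a' : ℝ} (hΔ : IsNetInterval f E n a a') : ENNReal.ofReal (κ ^ n) ≤ μ (Icc a a') := by
  induction n generalizing a a' with
  | zero =>
    obtain ⟨rfl, rfl⟩ := hΔ.eq_of_zero
    simp [hI]
  | succ k ih =>
    obtain ⟨c, c', hΔ', hsub⟩ := hΔ.exists_parent hf hρ hb h₀ h₁
    calc ENNReal.ofReal (κ ^ (k + 1)) = ENNReal.ofReal κ * ENNReal.ofReal (κ ^ k) := by
          rw [pow_succ', ENNReal.ofReal_mul hκ]
      _ ≤ ENNReal.ofReal κ * μ (Icc c c') := by gcongr; exact ih hΔ'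
      _ ≤ μ (Icc a a') := hstep hΔ hΔ' hsub

end NetIntervalMeasure

theorem stmt1
    (N : ℕ) (hN : 2 ≤ N) (ρ : ℝ) (hρ : ρ ∈ Set.Ioo (0 : ℝ) 1)
    (b : Fin N → ℝ) (hb : StrictMono b)
    (hb0 : b ⟨0, by omega⟩ = 0) (hbN : b ⟨N - 1, by omega⟩ = 1 - ρ)
    (f : Fin N → ℝ → ℝ) (hf : ∀ i x, f i x = ρ * x + b i)
    (E : Set ℝ) (hEcpt : IsCompact E) (hEne : E.Nonempty)
    (hE : E = ⋃ i, f i '' E)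
    -- finite-type condition
    (hFTC : ∃ Γ : Finset ℝ, ∀ n : ℕ, 1 ≤ n → ∀ σ ω : List (Fin N),
      σ.length = n → ω.length = n →
        |iterMap f σ 0 - iterMap f ω 0| / ρ ^ n ∈ Γ ∨
        1 < |iterMap f σ 0 - iterMap f ω 0| / ρ ^ n)
    -- total self-similarity of E
    (hTSS : ∀ ω : List (Fin N), ω ≠ [] →
      iterMap f ω '' E = iterMap f ω '' Set.Icc 0 1 ∩ E)
    -- the self-similar measure associated with a positive probability vector
    (p : Fin N → ℝ) (hp : ∀ i, 0 < p i) (hp1 : ∑ i, p i = 1)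
    (μ : Measure ℝ) [IsProbabilityMeasure μ]
    (hμ : μ = ∑ i, ENNReal.ofReal (p i) • μ.map (f i)) :
    ∃ C : ℝ, C ∈ Set.Ioo (0 : ℝ) 1 ∧
      (∀ n : ℕ, 1 ≤ n → ∀ a b' c d : ℝ,
        IsNetInterval f E n a b' → IsNetInterval f E (n - 1) c d →
        Set.Icc a b' ⊆ Set.Icc c d →
        ENNReal.ofReal C * μ (Set.Icc c d) ≤ μ (Set.Icc a b')) ∧
      (∀ n : ℕ, ∀ a b' : ℝ, IsNetInterval f E n a b' →
        ENNReal.ofReal (C ^ n) ≤ μ (Set.Icc a b')) := by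
  obtain ⟨Γ, hΓ⟩ := hFTC
  have : Nontrivial (Fin N) := Fin.nontrivial_iff_two_le.2 hN
  have hb' : ∀ i, b i ∈ Icc 0 (1 - ρ) := fun i =>
    ⟨hb0 ▸ hb.monotone (Nat.zero_le _), hbN ▸ hb.monotone (Nat.le_sub_one_of_lt i.isLt)⟩
  have h₀ : f ⟨0, by omega⟩ 0 = 0 := by rw [hf, hb0, mul_zero, add_zero]
  have h₁ : f ⟨N - 1, by omega⟩ 1 = 1 := by rw [hf, hbN]; ring
  have hEsub := attractor_subset_Icc hf hρ hb' hEcpt hEne hE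
  have hae := ae_mem_Ioo_zero_one hf hρ hb' hb.injective hb0 hbN hp
    (lt_one_of_sum_eq_one hp hp1) hp1 hμ
  have hI : μ (Icc 0 1) = 1 := by
    rw [← prob_compl_eq_zero_iff measurableSet_Icc]
    exact ae_iff.1 (hae.mono fun x hx => Ioo_subset_Icc_self hx)
  obtain ⟨κ, hκ, hκle⟩ := exists_ofReal_le_mul_measure_Icc (Γ := Γ) hf hρ hE hEsub hp hμ
    (by simp [hI])
  refine ⟨κ, hκ, fun n hn a a' c c' hΔ hΔ' hsub => ?_, fun n a a' =>
    ofReal_pow_le_measure_of_netInterval hf hρ.1 hb' h₀ h₁ hI hκ.1.le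
      (ofReal_mul_measure_le_of_subset_parent hf hρ.1 hE hEsub hTSS hμ hae hΓ hκle) n⟩
  obtain ⟨k, rfl⟩ : ∃ k, n = k + 1 := ⟨n - 1, by omega⟩
  exact ofReal_mul_measure_le_of_subset_parent hf hρ.1 hE hEsub hTSS hμ hae hΓ hκle hΔ hΔ' hsub
end

section
/- Let f_i(x) = ρx + b_i (i = 1,…,N) be an equi-contractive IFS on ℝ with 0 = b_1 < b_2 < … < b_N = 1 − ρ whose attractor E is totally self-similar. Let n ≥ 1, let Δ = [a,b] ∈ ℱ_n and Δ̂ = [c,d] ∈ ℱ_{n−1} with Δ ⊂ Δ̂. Then for every σ ∈ 𝒜_{n−1} with f_σ(E) ∩ (c,d) ≠ ∅, there exists k ∈ {1,…,N} such that f_{σ∗k}(E) ∩ (a,b) ≠ ∅, where σ∗k denotes the word σ followed by the letter k. -/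
/-!
If `f_σ(E)` meets the interior of the order-`(n-1)` net interval `[c, d]`, then, since
`f_σ(0), f_σ(1) ∈ P_{n-1}` cannot lie inside `(c, d)`, the whole of `[c, d]` lies in
`f_σ([0,1])`. By total self-similarity every point of `E` in the subinterval `(a, b')` then lies
in `f_σ(E) = ⋃ₖ f_{σk}(E)`.
-/

open Set

section IterMap

variable {N : ℕ} (f : Fin N → ℝ → ℝ)

theorem iterMap_append_singleton (σ : List (Fin N)) (k : Fin N) :
    iterMap f (σ ++ [k]) = iterMap f σ ∘ f k := by
  induction σ with
  | nil => rfl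
  | cons i σ ih => simp only [List.cons_append, iterMap, ih, Function.comp_assoc]

variable {f}

theorem monotone_iterMap (hf : ∀ i, Monotone (f i)) (σ : List (Fin N)) :
    Monotone (iterMap f σ) := by
  induction σ with
  | nil => exact monotone_id
  | cons i σ ih => exact (hf i).comp ih

theorem continuous_iterMap (hf : ∀ i, Continuous (f i)) (σ : List (Fin N)) :
    Continuous (iterMap f σ) := by
  induction σ with
  | nil => exact continuous_id
  | cons i σ ih => exact (hf i).comp ih

theorem image_iterMap_eq_iUnion_append {E : Set ℝ} (hE : E = ⋃ i, f i '' E)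
    (σ : List (Fin N)) : iterMap f σ '' E = ⋃ k, iterMap f (σ ++ [k]) '' E := by
  conv_lhs => rw [hE]
  simp only [image_iUnion, iterMap_append_singleton, image_comp]

theorem image_iterMap_Icc (hmono : ∀ i, Monotone (f i)) (hcont : ∀ i, Continuous (f i))
    (σ : List (Fin N)) : iterMap f σ '' Icc 0 1 = Icc (iterMap f σ 0) (iterMap f σ 1) :=
  (continuous_iterMap hcont σ).continuousOn.image_Icc_of_monotoneOn zero_le_one
    ((monotone_iterMap hmono σ).monotoneOn _)

end IterMap

theorem IsNetInterval.Icc_subset {N : ℕ} {f : Fin N → ℝ → ℝ} {E : Set ℝ} {m : ℕ} {c d p q : ℝ}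
    (h : IsNetInterval f E m c d) (hp : p ∈ PnSet f m) (hq : q ∈ PnSet f m)
    (hmeet : (Icc p q ∩ Ioo c d).Nonempty) : Icc c d ⊆ Icc p q := by
  obtain ⟨w, ⟨hpw, hwq⟩, hcw, hwd⟩ := hmeet
  have hpc : p ≤ c := (h.2.2.2.1 p hp).resolve_right fun hdp => by linarith
  have hdq : d ≤ q := (h.2.2.2.1 q hq).resolve_left fun hqc => by linarith
  exact Icc_subset_Icc hpc hdq

theorem stmt2
    (N : ℕ) (ρ : ℝ) (hρ : ρ ∈ Set.Ioo (0 : ℝ) 1)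
    (b : Fin N → ℝ)
    (f : Fin N → ℝ → ℝ) (hf : ∀ i x, f i x = ρ * x + b i)
    (E : Set ℝ)
    (hE : E = ⋃ i, f i '' E)
    -- total self-similarity of E
    (hTSS : ∀ ω : List (Fin N), ω ≠ [] →
      iterMap f ω '' E = iterMap f ω '' Set.Icc 0 1 ∩ E)
    (n : ℕ) (a b' c d : ℝ)
    (hΔ : IsNetInterval f E n a b') (hΔhat : IsNetInterval f E (n - 1) c d)
    (hsub : Set.Icc a b' ⊆ Set.Icc c d)
    (σ : List (Fin N)) (hσ : σ.length = n - 1)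
    (hmeet : (iterMap f σ '' E ∩ Set.Ioo c d).Nonempty) :
    ∃ k : Fin N, (iterMap f (σ ++ [k]) '' E ∩ Set.Ioo a b').Nonempty := by
  have hmono (i : Fin N) : Monotone (f i) := fun x y hxy => by
    simp only [hf]
    gcongr
    exact hρ.1.le
  have hcont (i : Fin N) : Continuous (f i) := by
    simp only [funext (hf i)]
    fun_prop
  obtain ⟨x, hxab, hxE⟩ := hΔ.2.2.2.2
  have hxσ : x ∈ iterMap f σ '' E := by
    rcases eq_or_ne σ [] with rfl | hσne
    · simpa only [iterMap, image_id] using hxE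
    rw [hTSS σ hσne, image_iterMap_Icc hmono hcont] at hmeet ⊢
    have hcd := hΔhat.Icc_subset ⟨σ, hσ, .inl rfl⟩ ⟨σ, hσ, .inr rfl⟩
      (hmeet.mono (inter_subset_inter_left _ inter_subset_left))
    exact ⟨hcd (hsub (Ioo_subset_Icc_self hxab)), hxE⟩
  rw [image_iterMap_eq_iUnion_append hE, mem_iUnion] at hxσ
  obtain ⟨k, hk⟩ := hxσ
  exact ⟨k, x, hk, hxab⟩
end

section
/- Let μ be a Borel probability measure on ℝ, r ∈ (0,∞), ρ ∈ (0,1), C₂ ∈ (0,1], C₃ ∈ (0,1), and s₀ ∈ ℕ. Let T be a nonempty set of finite words over a finite alphabet that is closed under taking prefixes and contains the empty word, and let each σ ∈ T be assigned a closed bounded interval I_σ ⊆ ℝ such that: (i) every σ ∈ T has at least one extension σ∗j ∈ T by one letter, and I_{σ∗j} ⊆ I_σ for every such extension; (ii) for distinct words of the same length the corresponding intervals have disjoint interiors; (iii) C₂ρ^{|σ|} ≤ |I_σ| ≤ C₂^{−1}ρ^{|σ|} for every σ ∈ T, where |I_σ| denotes the length of I_σ and |σ| the length of σ; (iv) μ(I_{σ∗j})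 ≥ C₃μ(I_σ) for every σ∗j ∈ T; (v) every σ ∈ T has at least two distinct extensions in T of length |σ| + s₀. Then for every L ∈ ℕ there exists a constant Z_L > 0, depending only on L, r, ρ, C₂, C₃, s₀, such that for every σ ∈ T and every finite set B ⊂ ℝ with card(B) ≤ L, ∫_{I_σ} d(x,B)^r dμ(x) ≥ Z_L · μ(I_σ) · |I_σ|^r, where d(x,B) = min_{b∈B}|x−b|. -/
/-!
Fix `L` and go `k = (L + 1) s₀` levels below `σ`. Branching gives `2 ^ (L + 1) > 2L` descendants
of `σ` at that level; their intervals have length at least `ℓ = C₂ ρ^{|σ| + k}` and pairwise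
disjoint interiors. Such intervals are so long that each point `b` comes within `ℓ / 2` of at
most two of them, so some descendant `τ` stays at distance `≥ ℓ / 2` from all of `B`. Then
`∫_{I_σ} d(x, B)^r dμ ≥ (ℓ / 2)^r μ(I_τ) ≥ (ℓ / 2)^r C₃^k μ(I_σ)`, and `ℓ / 2` is comparable to
`|I_σ|` by (iii).
-/

open MeasureTheory Set Finset
open scoped ENNReal

theorem le_or_le_of_disjoint_Ioo {α : Type*} [LinearOrder α] [DenselyOrdered α] {a₁ b₁ a₂ b₂ : α}
    (h₁ : a₁ < b₁) (h₂ : a₂ < b₂) (h : Disjoint (Ioo a₁ b₁) (Ioo a₂ b₂)) :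
    b₁ ≤ a₂ ∨ b₂ ≤ a₁ := by
  rw [Set.Ioo_disjoint_Ioo, min_le_iff, le_max_iff, le_max_iff] at h
  rcases h with (h | h) | (h | h)
  · exact absurd h h₁.not_ge
  · exact .inl h
  · exact .inr h
  · exact absurd h h₂.not_ge

section IntervalFamily

variable {ι : Type*} (S : Finset ι) (u v : ι → ℝ) {δ : ℝ}

theorem card_filter_near_le_two (hlen : ∀ i ∈ S, 2 * δ ≤ v i - u i)
    (hdisj : (S : Set ι).Pairwise fun i j => Disjoint (Ioo (u i) (v i)) (Ioo (u j) (v j)))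
    (b : ℝ) : #{i ∈ S | u i < b + δ ∧ b - δ < v i} ≤ 2 := by
  by_contra! h
  obtain ⟨i, j, k, hi, hj, hk, hij, hik, hjk⟩ := Finset.two_lt_card_iff.mp h
  simp only [Finset.mem_filter] at hi hj hk
  -- of three such intervals, the middle one would lie inside `(b - δ, b + δ)`
  have apart : ∀ {i j}, i ∈ S ∧ (u i < b + δ ∧ b - δ < v i) →
      j ∈ S ∧ (u j < b + δ ∧ b - δ < v j) → i ≠ j → v i ≤ u j ∨ v j ≤ u i := fun {i j} hi hj hij =>
    le_or_le_of_disjoint_Ioo (by linarith [hlen i hi.1]) (by linarith [hlen j hj.1])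
      (hdisj hi.1 hj.1 hij)
  have := hlen i hi.1
  have := hlen j hj.1
  have := hlen k hk.1
  rcases apart hi hj hij with _ | _ <;> rcases apart hi hk hik with _ | _ <;>
    rcases apart hj hk hjk with _ | _ <;> linarith

theorem exists_forall_le_dist_of_two_mul_card_lt (hlen : ∀ i ∈ S, 2 * δ ≤ v i - u i)
    (hdisj : (S : Set ι).Pairwise fun i j => Disjoint (Ioo (u i) (v i)) (Ioo (u j) (v j)))
    {B : Finset ℝ} (hB : 2 * #B < #S) :
    ∃ i ∈ S, ∀ x ∈ Icc (u i) (v i), ∀ b ∈ B, δ ≤ dist x b := by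
  classical
  obtain ⟨i, hiS, hfar⟩ : ∃ i ∈ S, ∀ b ∈ B, ¬(u i < b + δ ∧ b - δ < v i) := by
    by_contra! h
    have hcover : S ⊆ B.biUnion fun b => {i ∈ S | u i < b + δ ∧ b - δ < v i} := fun i hi => by
      obtain ⟨b, hb, hnear⟩ := h i hi
      exact Finset.mem_biUnion.mpr ⟨b, hb, Finset.mem_filter.mpr ⟨hi, hnear⟩⟩
    have := (Finset.card_le_card hcover).trans <| Finset.card_biUnion_le_card_mul _ _ 2
      fun b _ => card_filter_near_le_two S u v hlen hdisj b
    omega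
  refine ⟨i, hiS, fun x hx b hb => Real.dist_eq x b ▸ le_abs'.mpr ?_⟩
  by_cases hb' : u i < b + δ
  · exact .inl (by linarith [hx.2, not_and.mp (hfar b hb) hb'])
  · exact .inr (by linarith [hx.1])

end IntervalFamily

section WordTree

variable {A : Type*} {T : Set (List A)}

theorem append_induction_of_prefix_closed (hT : ∀ σ ∈ T, ∀ τ, τ <+: σ → τ ∈ T) {σ : List A}
    {P : List A → Prop} (nil : P [])
    (snoc : ∀ w j, σ ++ w ∈ T → σ ++ w ++ [j] ∈ T → P w → P (w ++ [j])) :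
    ∀ w, σ ++ w ∈ T → P w := by
  intro w
  induction w using List.reverseRecOn with
  | nil => exact fun _ => nil
  | append_singleton w j ih =>
    intro h
    rw [← List.append_assoc] at h
    have hw : σ ++ w ∈ T := hT _ h _ (List.prefix_append _ _)
    exact snoc w j hw h (ih hw)

theorem subset_of_append_mem {α : Type*} (hT : ∀ σ ∈ T, ∀ τ, τ <+: σ → τ ∈ T)
    {I : List A → Set α} (hnest : ∀ σ ∈ T, ∀ j, σ ++ [j] ∈ T → I (σ ++ [j]) ⊆ I σ)
    {σ w : List A} (h : σ ++ w ∈ T) : I (σ ++ w) ⊆ I σ := by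
  refine append_induction_of_prefix_closed hT (P := fun w => I (σ ++ w) ⊆ I σ) (by simp)
    (fun w j hw hwj ih => ?_) w h
  rw [← List.append_assoc]
  exact (hnest _ hw j hwj).trans ih

theorem pow_length_mul_le_of_append_mem (hT : ∀ σ ∈ T, ∀ τ, τ <+: σ → τ ∈ T)
    {m : List A → ℝ≥0∞} {c : ℝ≥0∞} (hm : ∀ σ ∈ T, ∀ j, σ ++ [j] ∈ T → c * m σ ≤ m (σ ++ [j]))
    {σ w : List A} (h : σ ++ w ∈ T) : c ^ w.length * m σ ≤ m (σ ++ w) := by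
  refine append_induction_of_prefix_closed hT (P := fun w => c ^ w.length * m σ ≤ m (σ ++ w))
    (by simp) (fun w j hw hwj ih => ?_) w h
  calc c ^ (w ++ [j]).length * m σ = c * (c ^ w.length * m σ) := by
        rw [List.length_append, List.length_singleton, pow_succ', mul_assoc]
    _ ≤ c * m (σ ++ w) := by gcongr
    _ ≤ m (σ ++ (w ++ [j])) := by rw [← List.append_assoc]; exact hm _ hw j hwj

theorem exists_two_pow_le_card_descendants {s₀ : ℕ}
    (hbranch : ∀ σ ∈ T, ∃ τ₁ ∈ T, ∃ τ₂ ∈ T, σ <+: τ₁ ∧ σ <+: τ₂ ∧ τ₁ ≠ τ₂ ∧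
      τ₁.length = σ.length + s₀ ∧ τ₂.length = σ.length + s₀)
    (m : ℕ) {σ : List A} (hσ : σ ∈ T) :
    ∃ S : Finset (List A), (∀ τ ∈ S, τ ∈ T ∧ σ <+: τ ∧ τ.length = σ.length + m * s₀) ∧
      2 ^ m ≤ #S := by
  classical
  induction m generalizing σ with
  | zero => exact ⟨{σ}, by simp [hσ], by simp⟩
  | succ m ih =>
    obtain ⟨τ₁, hτ₁, τ₂, hτ₂, hp₁, hp₂, hne, hl₁, hl₂⟩ := hbranch σ hσ
    obtain ⟨S₁, hS₁, hc₁⟩ := ih hτ₁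
    obtain ⟨S₂, hS₂, hc₂⟩ := ih hτ₂
    have hdisj : Disjoint S₁ S₂ := Finset.disjoint_left.mpr fun w hw₁ hw₂ => hne <| by
      obtain ⟨-, hw₁, -⟩ := hS₁ w hw₁
      obtain ⟨-, hw₂, -⟩ := hS₂ w hw₂
      exact (List.prefix_of_prefix_length_le hw₁ hw₂ (by omega)).eq_of_length (by omega)
    refine ⟨S₁ ∪ S₂, ?_, ?_⟩
    · simp only [Finset.mem_union]
      rintro τ (hτ | hτ)
      · obtain ⟨hτT, hpre, hlen⟩ := hS₁ τ hτ
        exact ⟨hτT, hp₁.trans hpre, by rw [hlen, hl₁]; ring⟩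
      · obtain ⟨hτT, hpre, hlen⟩ := hS₂ τ hτ
        exact ⟨hτT, hp₂.trans hpre, by rw [hlen, hl₂]; ring⟩
    · rw [Finset.card_union_of_disjoint hdisj, pow_succ]
      omega

theorem exists_append_mem_forall_le_dist {s₀ : ℕ} {u v : List A → ℝ} {g : ℕ → ℝ}
    (hbranch : ∀ σ ∈ T, ∃ τ₁ ∈ T, ∃ τ₂ ∈ T, σ <+: τ₁ ∧ σ <+: τ₂ ∧ τ₁ ≠ τ₂ ∧
      τ₁.length = σ.length + s₀ ∧ τ₂.length = σ.length + s₀)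
    (hdisj : ∀ σ ∈ T, ∀ τ ∈ T, σ.length = τ.length → σ ≠ τ →
      Ioo (u σ) (v σ) ∩ Ioo (u τ) (v τ) = ∅)
    (hlen : ∀ σ ∈ T, g σ.length ≤ v σ - u σ) {σ : List A} (hσ : σ ∈ T) {B : Finset ℝ} {L : ℕ}
    (hBL : #B ≤ L) :
    ∃ w, σ ++ w ∈ T ∧ w.length = (L + 1) * s₀ ∧
      ∀ x ∈ Icc (u (σ ++ w)) (v (σ ++ w)), ∀ b ∈ B, g (σ.length + (L + 1) * s₀) / 2 ≤ dist x b := by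
  obtain ⟨S, hS, hcard⟩ := exists_two_pow_le_card_descendants hbranch (L + 1) hσ
  have hBS : 2 * #B < #S := by
    have := Nat.lt_two_pow_self (n := L)
    rw [pow_succ] at hcard
    omega
  obtain ⟨τ, hτS, hfar⟩ := exists_forall_le_dist_of_two_mul_card_lt S u v
    (δ := g (σ.length + (L + 1) * s₀) / 2)
    (fun τ hτ => by rw [mul_div_cancel₀ _ two_ne_zero, ← (hS τ hτ).2.2]; exact hlen τ (hS τ hτ).1)
    (fun τ hτ τ' hτ' hne => Set.disjoint_iff_inter_eq_empty.mpr <|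
      hdisj τ (hS τ hτ).1 τ' (hS τ' hτ').1 (by rw [(hS τ hτ).2.2, (hS τ' hτ').2.2]) hne) hBS
  obtain ⟨hτT, ⟨w, rfl⟩, hτlen⟩ := hS τ hτS
  exact ⟨w, hτT, by simpa using hτlen, hfar⟩

end WordTree

theorem rpow_mul_measureReal_le_setIntegral_infDist_rpow {X : Type*} [MetricSpace X]
    [MeasurableSpace X] [OpensMeasurableSpace X] {μ : Measure X} [IsFiniteMeasure μ] {B s t : Set X}
    {r δ : ℝ} (hB : B.Nonempty) (hr : 0 ≤ r) (hδ : 0 ≤ δ) (hs : MeasurableSet s)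
    (ht : IsCompact t) (hst : s ⊆ t) (hfar : ∀ x ∈ s, ∀ y ∈ B, δ ≤ dist x y) :
    δ ^ r * μ.real s ≤ ∫ x in t, Metric.infDist x B ^ r ∂μ := by
  have hint : IntegrableOn (fun x => Metric.infDist x B ^ r) t μ :=
    ((Metric.continuous_infDist_pt B).rpow_const fun _ => .inr hr).continuousOn
      |>.integrableOn_compact ht
  refine (setIntegral_ge_of_const_le_real hs (measure_ne_top μ s) (fun x hx => ?_)
    (hint.mono_set hst)).trans (setIntegral_mono_set hint
      (.of_forall fun _ => Real.rpow_nonneg Metric.infDist_nonneg r) hst.eventuallyLE)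
  exact Real.rpow_le_rpow hδ ((Metric.le_infDist hB).mpr (hfar x hx)) hr

theorem stmt5_general
    (μ : Measure ℝ) [IsProbabilityMeasure μ]
    (r ρ C₂ C₃ : ℝ) (hr : 0 < r) (hρ : ρ ∈ Set.Ioo (0 : ℝ) 1)
    (hC₂ : C₂ ∈ Set.Ioc (0 : ℝ) 1) (hC₃ : C₃ ∈ Set.Ioo (0 : ℝ) 1) (s₀ : ℕ)
    (A : Type)
    (T : Set (List A))
    (hTpref : ∀ σ ∈ T, ∀ τ : List A, τ <+: σ → τ ∈ T)
    -- the interval `I_σ` is `[u σ, v σ]`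
    (u v : List A → ℝ)
    -- (i) every word of `T` has an extension by one letter, and intervals nest
    (hnest : ∀ σ ∈ T, ∀ j : A, σ ++ [j] ∈ T →
      Set.Icc (u (σ ++ [j])) (v (σ ++ [j])) ⊆ Set.Icc (u σ) (v σ))
    -- (ii) intervals of distinct words of the same length have disjoint interiors
    (hdisj : ∀ σ ∈ T, ∀ τ ∈ T, σ.length = τ.length → σ ≠ τ →
      Set.Ioo (u σ) (v σ) ∩ Set.Ioo (u τ) (v τ) = ∅)
    -- (iii) `C₂ ρ^{|σ|} ≤ |I_σ| ≤ C₂⁻¹ ρ^{|σ|}`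
    (hlen : ∀ σ ∈ T, C₂ * ρ ^ σ.length ≤ v σ - u σ ∧ v σ - u σ ≤ C₂⁻¹ * ρ ^ σ.length)
    -- (iv) `μ(I_{σ∗j}) ≥ C₃ μ(I_σ)`
    (hher : ∀ σ ∈ T, ∀ j : A, σ ++ [j] ∈ T →
      ENNReal.ofReal C₃ * μ (Set.Icc (u σ) (v σ)) ≤
        μ (Set.Icc (u (σ ++ [j])) (v (σ ++ [j]))))
    -- (v) every word of `T` has at least two extensions in `T` of length `|σ| + s₀`
    (hbranch : ∀ σ ∈ T, ∃ τ₁ ∈ T, ∃ τ₂ ∈ T, σ <+: τ₁ ∧ σ <+: τ₂ ∧ τ₁ ≠ τ₂ ∧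
      τ₁.length = σ.length + s₀ ∧ τ₂.length = σ.length + s₀) :
    ∀ L : ℕ, ∃ Z : ℝ, 0 < Z ∧ ∀ σ ∈ T, ∀ B : Finset ℝ, B.Nonempty → B.card ≤ L →
      Z * (μ (Set.Icc (u σ) (v σ))).toReal * (v σ - u σ) ^ r ≤
        ∫ x in Set.Icc (u σ) (v σ), (Metric.infDist x (B : Set ℝ)) ^ r ∂μ := by
  obtain ⟨hρ0, -⟩ := hρ
  obtain ⟨hC₂0, -⟩ := hC₂
  obtain ⟨hC₃0, -⟩ := hC₃
  intro L
  set k := (L + 1) * s₀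
  set c := C₂ ^ 2 * ρ ^ k / 2
  refine ⟨c ^ r * C₃ ^ k, by positivity, fun σ hσ B hB hBL => ?_⟩
  obtain ⟨w, hw, hwlen, hfar⟩ := exists_append_mem_forall_le_dist (g := fun n => C₂ * ρ ^ n)
    hbranch hdisj (fun τ hτ => (hlen τ hτ).1) hσ hBL
  set δ := C₂ * ρ ^ (σ.length + k) / 2
  have hmeas : C₃ ^ k * μ.real (Icc (u σ) (v σ)) ≤ μ.real (Icc (u (σ ++ w)) (v (σ ++ w))) := by
    have := ENNReal.toReal_mono (measure_ne_top μ _) (pow_length_mul_le_of_append_mem hTpref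
      (m := fun σ => μ (Icc (u σ) (v σ))) hher hw)
    rwa [ENNReal.toReal_mul, ENNReal.toReal_pow, ENNReal.toReal_ofReal hC₃0.le, hwlen] at this
  have hscale : c * (v σ - u σ) ≤ δ :=
    calc c * (v σ - u σ) ≤ c * (C₂⁻¹ * ρ ^ σ.length) := by gcongr; exact (hlen σ hσ).2
      _ = δ := by field_simp; ring
  have hpos : 0 ≤ v σ - u σ := le_trans (by positivity) (hlen σ hσ).1
  calc c ^ r * C₃ ^ k * (μ (Icc (u σ) (v σ))).toReal * (v σ - u σ) ^ r
      = (c * (v σ - u σ)) ^ r * (C₃ ^ k * μ.real (Icc (u σ) (v σ))) := by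
        rw [Real.mul_rpow (by positivity) hpos, measureReal_def]; ring
    _ ≤ δ ^ r * μ.real (Icc (u (σ ++ w)) (v (σ ++ w))) := by gcongr
    _ ≤ _ := rpow_mul_measureReal_le_setIntegral_infDist_rpow (by exact_mod_cast hB) hr.le
        (by positivity) measurableSet_Icc isCompact_Icc
        (subset_of_append_mem hTpref (I := fun σ => Icc (u σ) (v σ)) hnest hw) hfar

theorem stmt5
    (μ : Measure ℝ) [IsProbabilityMeasure μ]
    (r ρ C₂ C₃ : ℝ) (hr : 0 < r) (hρ : ρ ∈ Set.Ioo (0 : ℝ) 1)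
    (hC₂ : C₂ ∈ Set.Ioc (0 : ℝ) 1) (hC₃ : C₃ ∈ Set.Ioo (0 : ℝ) 1) (s₀ : ℕ)
    (A : Type) [Fintype A]
    (T : Set (List A)) (hTnil : [] ∈ T)
    (hTpref : ∀ σ ∈ T, ∀ τ : List A, τ <+: σ → τ ∈ T)
    -- the interval `I_σ` is `[u σ, v σ]`
    (u v : List A → ℝ)
    -- (i) every word of `T` has an extension by one letter, and intervals nest
    (hext : ∀ σ ∈ T, ∃ j : A, σ ++ [j] ∈ T)
    (hnest : ∀ σ ∈ T, ∀ j : A, σ ++ [j] ∈ T →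
      Set.Icc (u (σ ++ [j])) (v (σ ++ [j])) ⊆ Set.Icc (u σ) (v σ))
    -- (ii) intervals of distinct words of the same length have disjoint interiors
    (hdisj : ∀ σ ∈ T, ∀ τ ∈ T, σ.length = τ.length → σ ≠ τ →
      Set.Ioo (u σ) (v σ) ∩ Set.Ioo (u τ) (v τ) = ∅)
    -- (iii) `C₂ ρ^{|σ|} ≤ |I_σ| ≤ C₂⁻¹ ρ^{|σ|}`
    (hlen : ∀ σ ∈ T, C₂ * ρ ^ σ.length ≤ v σ - u σ ∧ v σ - u σ ≤ C₂⁻¹ * ρ ^ σ.length)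
    -- (iv) `μ(I_{σ∗j}) ≥ C₃ μ(I_σ)`
    (hher : ∀ σ ∈ T, ∀ j : A, σ ++ [j] ∈ T →
      ENNReal.ofReal C₃ * μ (Set.Icc (u σ) (v σ)) ≤
        μ (Set.Icc (u (σ ++ [j])) (v (σ ++ [j]))))
    -- (v) every word of `T` has at least two extensions in `T` of length `|σ| + s₀`
    (hbranch : ∀ σ ∈ T, ∃ τ₁ ∈ T, ∃ τ₂ ∈ T, σ <+: τ₁ ∧ σ <+: τ₂ ∧ τ₁ ≠ τ₂ ∧
      τ₁.length = σ.length + s₀ ∧ τ₂.length = σ.length + s₀) :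
    ∀ L : ℕ, ∃ Z : ℝ, 0 < Z ∧ ∀ σ ∈ T, ∀ B : Finset ℝ, B.Nonempty → B.card ≤ L →
      Z * (μ (Set.Icc (u σ) (v σ))).toReal * (v σ - u σ) ^ r ≤
        ∫ x in Set.Icc (u σ) (v σ), (Metric.infDist x (B : Set ℝ)) ^ r ∂μ :=
  stmt5_general μ r ρ C₂ C₃ hr hρ hC₂ hC₃ s₀ A T hTpref u v hnest hdisj hlen hher hbranch
end

section
/- Consider the IFS f_1(x) = x/3, f_2(x) = x/3 + 1/9, f_3(x) = x/3 + 2/3 on ℝ with attractor E. Then the basic net intervals of order 1 are exactly ℱ_1 = {[0, 1/9], [1/9, 1/3], [1/3, 4/9], [2/3, 1]}; moreover [4/27, 2/9] is a basic net interval of order 2 contained in [1/9, 1/3], f_1(E) ∩ (1/9, 1/3) ≠ ∅, and f_1(E) ∩ (4/27, 2/9) = ∅ (so in particular f_{1∗k}(E) ∩ (4/27, 2/9) = ∅ for every k ∈ {1,2,3}). -/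
open Set

/-! The maps `f 0, f 1, f 2` are the contractions `x ↦ x / 3 + c` with `c = 0, 1/9, 2/3`.
Comparing `sSup E` and `sInf E` with their preimages gives `E ⊆ [0, 1]`, and `E` contains the
fixed points `0` of `f 0` and `1` of `f 2`. So `P_1 = {0, 1/9, 1/3, 4/9, 2/3, 1}`, and `E` misses
the gap `(4/9, 2/3)` between `f 1 [0, 1] = [1/9, 4/9]` and `f 2 [0, 1] = [2/3, 1]`, which makes
`[4/9, 2/3]` the only interval between consecutive points of `P_1` that is not a net interval.
Its image `(4/27, 2/9)` under `f 0` misses `f 0 (E)`, yet it is a net interval of order 2, since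
`5/27 = f 1 (f 0 (f 2 0)) ∈ E`. -/

open Filter Function

structure IsAttractor {α ι : Type*} [TopologicalSpace α] (f : ι → α → α) (E : Set α) : Prop where
  isCompact : IsCompact E
  nonempty : E.Nonempty
  eq_iUnion_image : E = ⋃ i, f i '' E

namespace IsAttractor

variable {α ι : Type*} {f : ι → α → α} {E : Set α}

theorem mapsTo [TopologicalSpace α] (hE : IsAttractor f E) (i : ι) : MapsTo (f i) E E :=
  mapsTo_iff_image_subset.2 <| (subset_iUnion (fun i => f i '' E) i).trans hE.eq_iUnion_image.ge

theorem mem_of_isFixedPt [MetricSpace α] [CompleteSpace α] (hE : IsAttractor f E) {i : ι}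
    {K : NNReal} (hK : ContractingWith K (f i)) {p : α} (hp : IsFixedPt (f i) p) : p ∈ E := by
  obtain ⟨x, hx⟩ := hE.nonempty
  have : Nonempty α := ⟨x⟩
  rw [hK.fixedPoint_unique hp]
  exact hE.isCompact.isClosed.mem_of_tendsto (hK.tendsto_iterate_fixedPoint x)
    (Eventually.of_forall fun n => (hE.mapsTo i).iterate n hx)

end IsAttractor

theorem contractingWith_affine {r : ℝ} (hr0 : 0 ≤ r) (hr1 : r < 1) (c : ℝ) :
    ContractingWith (Real.toNNReal r) (fun x => r * x + c) := by
  refine ⟨by simpa using hr1, LipschitzWith.of_dist_le_mul fun x y => ?_⟩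
  simp [Real.dist_eq, Real.coe_toNNReal r hr0, ← mul_sub, abs_mul, abs_of_nonneg hr0]

theorem mem_PnSet_zero_s14 {N : ℕ} {f : Fin N → ℝ → ℝ} {y : ℝ} : y ∈ PnSet f 0 ↔ y = 0 ∨ y = 1 := by
  simp [PnSet, iterMap, eq_comm]

theorem mem_PnSet_succ {N : ℕ} {f : Fin N → ℝ → ℝ} {n : ℕ} {y : ℝ} :
    y ∈ PnSet f (n + 1) ↔ ∃ i, ∃ x ∈ PnSet f n, f i x = y := by
  constructor
  · rintro ⟨_ | ⟨i, σ⟩, hlen, hy | hy⟩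
    iterate 2 simp at hlen
    · exact ⟨i, _, ⟨σ, by simpa using hlen, .inl rfl⟩, hy⟩
    · exact ⟨i, _, ⟨σ, by simpa using hlen, .inr rfl⟩, hy⟩
  · rintro ⟨i, x, ⟨σ, rfl, hx⟩, rfl⟩
    exact ⟨i :: σ, rfl, hx.imp (congrArg (f i)) (congrArg (f i))⟩

noncomputable def tripleIFS : Fin 3 → ℝ → ℝ := fun i x => 3⁻¹ * x + ![0, 1 / 9, 2 / 3] i

@[simp] theorem tripleIFS_zero (x : ℝ) : tripleIFS 0 x = x / 3 := by
  simp [tripleIFS, div_eq_inv_mul]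

@[simp] theorem tripleIFS_one (x : ℝ) : tripleIFS 1 x = x / 3 + 1 / 9 := by
  simp [tripleIFS, div_eq_inv_mul]

@[simp] theorem tripleIFS_two (x : ℝ) : tripleIFS 2 x = x / 3 + 2 / 3 := by
  simp [tripleIFS, div_eq_inv_mul]

theorem mem_PnSet_one_tripleIFS {y : ℝ} :
    y ∈ PnSet tripleIFS 1 ↔ y = 0 ∨ y = 1 / 9 ∨ y = 1 / 3 ∨ y = 4 / 9 ∨ y = 2 / 3 ∨ y = 1 := by
  simp only [mem_PnSet_succ, mem_PnSet_zero_s14, Fin.exists_fin_succ]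
  simp only [exists_eq_or_imp, Fin.succ_zero_eq_one, Fin.succ_one_eq_two, tripleIFS_zero,
    tripleIFS_one, tripleIFS_two]
  norm_num
  tauto

theorem consecutive_PnSet_one_tripleIFS_iff {a b : ℝ} :
    (a ∈ PnSet tripleIFS 1 ∧ b ∈ PnSet tripleIFS 1 ∧ a < b ∧
        ∀ y ∈ PnSet tripleIFS 1, y ≤ a ∨ b ≤ y) ↔
      (a = 0 ∧ b = 1 / 9) ∨ (a = 1 / 9 ∧ b = 1 / 3) ∨ (a = 1 / 3 ∧ b = 4 / 9) ∨
        (a = 4 / 9 ∧ b = 2 / 3) ∨ (a = 2 / 3 ∧ b = 1) := by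
  constructor
  · rintro ⟨ha, hb, hab, hsep⟩
    have h19 := hsep (1 / 9) (by norm_num [mem_PnSet_one_tripleIFS])
    have h13 := hsep (1 / 3) (by norm_num [mem_PnSet_one_tripleIFS])
    have h49 := hsep (4 / 9) (by norm_num [mem_PnSet_one_tripleIFS])
    have h23 := hsep (2 / 3) (by norm_num [mem_PnSet_one_tripleIFS])
    clear hsep
    rcases mem_PnSet_one_tripleIFS.1 ha with rfl | rfl | rfl | rfl | rfl | rfl <;>
      rcases mem_PnSet_one_tripleIFS.1 hb with rfl | rfl | rfl | rfl | rfl | rfl <;>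
      norm_num at *
  · rintro (⟨rfl, rfl⟩ | ⟨rfl, rfl⟩ | ⟨rfl, rfl⟩ | ⟨rfl, rfl⟩ | ⟨rfl, rfl⟩) <;>
      refine ⟨by norm_num [mem_PnSet_one_tripleIFS], by norm_num [mem_PnSet_one_tripleIFS],
        by norm_num, fun y hy => ?_⟩ <;>
      rcases mem_PnSet_one_tripleIFS.1 hy with rfl | rfl | rfl | rfl | rfl | rfl <;> norm_num

theorem le_or_ge_of_mem_PnSet_two_tripleIFS {y : ℝ} (hy : y ∈ PnSet tripleIFS 2) :
    y ≤ 4 / 27 ∨ 2 / 9 ≤ y := by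
  obtain ⟨i, x, hx, rfl⟩ := mem_PnSet_succ.1 hy
  rcases mem_PnSet_one_tripleIFS.1 hx with rfl | rfl | rfl | rfl | rfl | rfl <;>
    fin_cases i <;> norm_num [tripleIFS]

namespace IsAttractor

variable {E : Set ℝ}

theorem mem_of_iterMap_eq {N : ℕ} {f : Fin N → ℝ → ℝ} (hE : IsAttractor f E)
    {x y : ℝ} (hx : x ∈ E) (σ : List (Fin N)) (hσ : iterMap f σ x = y) : y ∈ E := by
  subst hσ
  induction σ with
  | nil => exact hx
  | cons i σ ih => exact hE.mapsTo i ih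

theorem subset_Icc_of_affine {ι : Type*} {f : ι → ℝ → ℝ} {r : ℝ} {c : ι → ℝ}
    (hE : IsAttractor f E) (hr0 : 0 ≤ r) (hr1 : r < 1)
    (hf : ∀ i x, f i x = r * x + c i) (hc : ∀ i, 0 ≤ c i ∧ c i ≤ 1 - r) :
    E ⊆ Icc 0 1 := by
  have hpre : ∀ x ∈ E, ∃ i, ∃ y ∈ E, r * y + c i = x := fun x hx => by
    rw [hE.eq_iUnion_image] at hx
    simpa [hf] using hx
  have hbdd := hE.isCompact
  intro x hx
  -- `sSup E = r y + c i ≤ r sSup E + (1 - r)` forces `sSup E ≤ 1`, and dually `0 ≤ sInf E`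
  obtain ⟨i, y, hy, hsup⟩ := hpre _ (hbdd.sSup_mem hE.nonempty)
  obtain ⟨j, z, hz, hinf⟩ := hpre _ (hbdd.sInf_mem hE.nonempty)
  have hx_le := le_csSup hbdd.bddAbove hx
  have hy_le := le_csSup hbdd.bddAbove hy
  have hle_x := csInf_le hbdd.bddBelow hx
  have hle_z := csInf_le hbdd.bddBelow hz
  constructor <;> nlinarith [hc i, hc j]

theorem tripleIFS_subset_Icc (hE : IsAttractor tripleIFS E) : E ⊆ Icc 0 1 :=
  hE.subset_Icc_of_affine (by norm_num) (by norm_num) (fun _ _ => rfl) fun i => by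
    fin_cases i <;> norm_num

theorem tripleIFS_zero_mem (hE : IsAttractor tripleIFS E) : (0 : ℝ) ∈ E :=
  hE.mem_of_isFixedPt (i := 0) (contractingWith_affine (by norm_num) (by norm_num) _)
    (by simp [IsFixedPt])

theorem tripleIFS_one_mem (hE : IsAttractor tripleIFS E) : (1 : ℝ) ∈ E :=
  hE.mem_of_isFixedPt (i := 2) (contractingWith_affine (by norm_num) (by norm_num) _)
    (by norm_num [IsFixedPt])

theorem tripleIFS_notMem_Ioo (hE : IsAttractor tripleIFS E) {x : ℝ} (hx : x ∈ E) :
    x ∉ Ioo (4 / 9) (2 / 3) := by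
  rw [hE.eq_iUnion_image] at hx
  obtain ⟨i, y, hy, rfl⟩ := mem_iUnion.1 hx
  obtain ⟨hy0, hy1⟩ := hE.tripleIFS_subset_Icc hy
  fin_cases i <;> simp [tripleIFS] <;> intros <;> linarith

theorem tripleIFS_image_zero_inter_Ioo (hE : IsAttractor tripleIFS E) :
    tripleIFS 0 '' E ∩ Ioo (4 / 27) (2 / 9) = ∅ := by
  refine eq_empty_of_forall_notMem fun x ⟨⟨y, hy, hyx⟩, hx⟩ => hE.tripleIFS_notMem_Ioo hy ?_
  rw [← hyx, tripleIFS_zero, mem_Ioo] at hx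
  constructor <;> linarith [hx.1, hx.2]

theorem tripleIFS_isNetInterval_one_iff (hE : IsAttractor tripleIFS E) (a b : ℝ) :
    IsNetInterval tripleIFS E 1 a b ↔
      ((a, b) = ((0 : ℝ), (1 / 9 : ℝ)) ∨ (a, b) = ((1 / 9 : ℝ), (1 / 3 : ℝ)) ∨
        (a, b) = ((1 / 3 : ℝ), (4 / 9 : ℝ)) ∨ (a, b) = ((2 / 3 : ℝ), (1 : ℝ))) := by
  have h0 := hE.tripleIFS_zero_mem
  have h1 := hE.tripleIFS_one_mem
  have hgap : ¬(Ioo (4 / 9 : ℝ) (2 / 3) ∩ E).Nonempty := fun ⟨x, hx, hxE⟩ =>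
    hE.tripleIFS_notMem_Ioo hxE hx
  have hnet : IsNetInterval tripleIFS E 1 a b ↔
      (a ∈ PnSet tripleIFS 1 ∧ b ∈ PnSet tripleIFS 1 ∧ a < b ∧
        ∀ y ∈ PnSet tripleIFS 1, y ≤ a ∨ b ≤ y) ∧ (Ioo a b ∩ E).Nonempty := by
    simp only [IsNetInterval, and_assoc]
  rw [hnet, consecutive_PnSet_one_tripleIFS_iff]
  constructor
  · rintro ⟨⟨rfl, rfl⟩ | ⟨rfl, rfl⟩ | ⟨rfl, rfl⟩ | ⟨rfl, rfl⟩ | ⟨rfl, rfl⟩, hne⟩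
    exacts [by simp, by simp, by simp, absurd hne hgap, by simp]
  · rintro (h | h | h | h) <;> obtain ⟨rfl, rfl⟩ := Prod.ext_iff.1 h
    · exact ⟨by norm_num, 1 / 27, by norm_num,
        hE.mem_of_iterMap_eq h0 [0, 1] (by norm_num [iterMap])⟩
    · exact ⟨by norm_num, 2 / 9, by norm_num,
        hE.mem_of_iterMap_eq h0 [0, 2] (by norm_num [iterMap])⟩
    · exact ⟨by norm_num, 10 / 27, by norm_num,
        hE.mem_of_iterMap_eq h1 [1, 2, 0] (by norm_num [iterMap])⟩
    · exact ⟨by norm_num, 7 / 9, by norm_num,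
        hE.mem_of_iterMap_eq h1 [2, 0] (by norm_num [iterMap])⟩

theorem tripleIFS_isNetInterval_two (hE : IsAttractor tripleIFS E) :
    IsNetInterval tripleIFS E 2 (4 / 27) (2 / 9) :=
  ⟨mem_PnSet_succ.2 ⟨0, 4 / 9, by norm_num [mem_PnSet_one_tripleIFS], by norm_num⟩,
    mem_PnSet_succ.2 ⟨0, 2 / 3, by norm_num [mem_PnSet_one_tripleIFS], by norm_num⟩,
    by norm_num, fun _ => le_or_ge_of_mem_PnSet_two_tripleIFS,
    5 / 27, by norm_num,
    hE.mem_of_iterMap_eq hE.tripleIFS_zero_mem [1, 0, 2] (by norm_num [iterMap])⟩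

end IsAttractor

theorem stmt14
    (f : Fin 3 → ℝ → ℝ)
    (hf1 : ∀ x, f 0 x = x / 3) (hf2 : ∀ x, f 1 x = x / 3 + 1 / 9)
    (hf3 : ∀ x, f 2 x = x / 3 + 2 / 3)
    (E : Set ℝ) (hEcpt : IsCompact E) (hEne : E.Nonempty)
    (hE : E = ⋃ i, f i '' E) :
    (∀ a b : ℝ, IsNetInterval f E 1 a b ↔
      ((a, b) = ((0 : ℝ), (1 / 9 : ℝ)) ∨ (a, b) = ((1 / 9 : ℝ), (1 / 3 : ℝ)) ∨
        (a, b) = ((1 / 3 : ℝ), (4 / 9 : ℝ)) ∨ (a, b) = ((2 / 3 : ℝ), (1 : ℝ)))) ∧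
    IsNetInterval f E 2 (4 / 27) (2 / 9) ∧
    Set.Icc (4 / 27 : ℝ) (2 / 9) ⊆ Set.Icc (1 / 9 : ℝ) (1 / 3) ∧
    (f 0 '' E ∩ Set.Ioo (1 / 9 : ℝ) (1 / 3)).Nonempty ∧
    f 0 '' E ∩ Set.Ioo (4 / 27 : ℝ) (2 / 9) = ∅ ∧
    ∀ k : Fin 3, (f 0 ∘ f k) '' E ∩ Set.Ioo (4 / 27 : ℝ) (2 / 9) = ∅ := by
  obtain rfl : f = tripleIFS := by
    ext i x
    fin_cases i
    exacts [(hf1 x).trans (tripleIFS_zero x).symm, (hf2 x).trans (tripleIFS_one x).symm,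
      (hf3 x).trans (tripleIFS_two x).symm]
  have hA : IsAttractor tripleIFS E := ⟨hEcpt, hEne, hE⟩
  have h23 : (2 / 3 : ℝ) ∈ E :=
    hA.mem_of_iterMap_eq hA.tripleIFS_zero_mem [2] (by norm_num [iterMap])
  refine ⟨hA.tripleIFS_isNetInterval_one_iff, hA.tripleIFS_isNetInterval_two,
    Icc_subset_Icc (by norm_num) (by norm_num), ⟨2 / 9, ⟨2 / 3, h23, by norm_num⟩, by norm_num⟩,
    hA.tripleIFS_image_zero_inter_Ioo, fun k => subset_empty_iff.1 ?_⟩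
  rw [← hA.tripleIFS_image_zero_inter_Ioo, image_comp]
  exact inter_subset_inter_left _ (image_mono (hA.mapsTo k).image_subset)
end
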